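/- arXiv:1506.00193 — 2 statements merged into one kernel-verified Lean document; each statement's English description precedes it below -/
import Mathlib

section
/- Let X, Y be real random variables with E[X^2] = E[Y^2] = 1 and E[XY] = ρ, and let V satisfy the Markov chain X - V - Y. Define D_X = E[(X - E[X|V])^2] and D_Y = E[(Y - E[Y|V])^2]. Then ρ^2 ≤ (1 - D_X)(1 - D_Y). -/
/-!
Conditioning on `V` is an orthogonal projection in `L²`, so `1 - D_X = E[E[X|V]²]` and
`1 - D_Y = E[E[Y|V]²]`, while the Markov property `E[XY|V] = E[X|V] E[Y|V]` gives
`ρ = E[E[X|V] E[Y|V]]`. The claim is then Cauchy–Schwarz for `E[X|V]` and `E[Y|V]`.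
-/

open MeasureTheory ProbabilityTheory

section

variable {Ω : Type*} {mΩ : MeasurableSpace Ω} {μ : Measure Ω}

lemma MeasureTheory.MemLp.inner_toLp_eq_integral_mul {f g : Ω → ℝ} (hf : MemLp f 2 μ) (hg : MemLp g 2 μ) :
    inner ℝ (hf.toLp f) (hg.toLp g) = ∫ ω, f ω * g ω ∂μ := by
  rw [L2.inner_def]
  refine integral_congr_ae ?_
  filter_upwards [hf.coeFn_toLp, hg.coeFn_toLp] with ω hfω hgω
  simp [hfω, hgω, mul_comm]

lemma sq_integral_mul_le_integral_sq_mul_integral_sq {f g : Ω → ℝ}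
    (hf : MemLp f 2 μ) (hg : MemLp g 2 μ) :
    (∫ ω, f ω * g ω ∂μ) ^ 2 ≤ (∫ ω, f ω ^ 2 ∂μ) * ∫ ω, g ω ^ 2 ∂μ := by
  simpa only [MemLp.inner_toLp_eq_integral_mul, sq] using
    real_inner_mul_inner_self_le (hf.toLp f) (hg.toLp g)

variable {m : MeasurableSpace Ω}

lemma integral_sub_condExp_sq (hm : m ≤ mΩ) [IsFiniteMeasure μ] {f : Ω → ℝ}
    (hf : MemLp f 2 μ) :
    ∫ ω, (f ω - (μ[f | m]) ω) ^ 2 ∂μ = ∫ ω, f ω ^ 2 ∂μ - ∫ ω, (μ[f | m]) ω ^ 2 ∂μ :=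
  calc ∫ ω, (f ω - (μ[f | m]) ω) ^ 2 ∂μ
    _ = ∫ ω, (Var[f; μ | m]) ω ∂μ := (integral_condExp hm).symm
    _ = ∫ ω, ((μ[f ^ 2 | m]) ω - (μ[f | m]) ω ^ 2) ∂μ :=
      integral_congr_ae (condVar_ae_eq_condExp_sq_sub_sq_condExp hm hf)
    _ = ∫ ω, f ω ^ 2 ∂μ - ∫ ω, (μ[f | m]) ω ^ 2 ∂μ := by
      rw [integral_sub integrable_condExp (hf.condExp one_le_two).integrable_sq,
        integral_condExp hm]
      rfl

theorem sq_integral_mul_le_of_condExp_mul_ae_eq (hm : m ≤ mΩ) [IsFiniteMeasure μ]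
    {f g : Ω → ℝ} (hf : MemLp f 2 μ) (hg : MemLp g 2 μ)
    (hfg : μ[fun ω => f ω * g ω | m] =ᵐ[μ] fun ω => (μ[f | m]) ω * (μ[g | m]) ω) :
    (∫ ω, f ω * g ω ∂μ) ^ 2 ≤
      (∫ ω, f ω ^ 2 ∂μ - ∫ ω, (f ω - (μ[f | m]) ω) ^ 2 ∂μ) *
        (∫ ω, g ω ^ 2 ∂μ - ∫ ω, (g ω - (μ[g | m]) ω) ^ 2 ∂μ) := by
  have hint : ∫ ω, f ω * g ω ∂μ = ∫ ω, (μ[f | m]) ω * (μ[g | m]) ω ∂μ := by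
    rw [← integral_condExp hm]
    exact integral_congr_ae hfg
  rw [hint, integral_sub_condExp_sq hm hf, integral_sub_condExp_sq hm hg, sub_sub_cancel,
    sub_sub_cancel]
  exact sq_integral_mul_le_integral_sq_mul_integral_sq (hf.condExp one_le_two)
    (hg.condExp one_le_two)

end

/-- If `E[X²] = E[Y²] = 1`, `E[XY] = ρ`, and `X - V - Y` is a Markov chain
(conditional independence expressed via `E[XY|V] = E[X|V]·E[Y|V]` a.s.), then with
`D_X = E[(X - E[X|V])²]` and `D_Y = E[(Y - E[Y|V])²]` we have `ρ² ≤ (1 - D_X)(1 - D_Y)`. -/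
theorem stmt1 {Ω β : Type*} [MeasurableSpace Ω] [MeasurableSpace β]
    (μ : Measure Ω) [IsProbabilityMeasure μ]
    (X Y : Ω → ℝ) (V : Ω → β) (ρ : ℝ)
    (hX : MemLp X 2 μ) (hY : MemLp Y 2 μ) (hV : Measurable V)
    (hX2 : ∫ ω, X ω ^ 2 ∂μ = 1) (hY2 : ∫ ω, Y ω ^ 2 ∂μ = 1)
    (hρ : ∫ ω, X ω * Y ω ∂μ = ρ)
    (hMarkov : μ[fun ω => X ω * Y ω | MeasurableSpace.comap V inferInstance]
      =ᵐ[μ] fun ω => (μ[X | MeasurableSpace.comap V inferInstance]) ω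
        * (μ[Y | MeasurableSpace.comap V inferInstance]) ω)
    (DX DY : ℝ)
    (hDX : DX = ∫ ω, (X ω - (μ[X | MeasurableSpace.comap V inferInstance]) ω) ^ 2 ∂μ)
    (hDY : DY = ∫ ω, (Y ω - (μ[Y | MeasurableSpace.comap V inferInstance]) ω) ^ 2 ∂μ) :
    ρ ^ 2 ≤ (1 - DX) * (1 - DY) := by
  have := sq_integral_mul_le_of_condExp_mul_ae_eq hV.comap_le hX hY hMarkov
  rwa [hX2, hY2, hρ, ← hDX, ← hDY] at this
end

section
/- Fix λ ≥ 0 and ρ ∈ (0,1), and define f_λ(x) = (1-x)^{λ+1}(x - ρ^2)/x for x ∈ [ρ^2, 1]. Then f_λ attains its maximum on [ρ^2, 1] at x* = (λρ^2 + ρ·√(λ^2ρ^2 + 4(λ+1))) / (2(λ+1)). -/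
open Real

/-!
The derivative of `f_λ` is `(1 - x)^λ q(x) / x²` with `q(x) = ρ² + λρ²x - (λ+1)x²`, and `x*` is the
positive root of `q`. Subtracting `q(x*) = 0` factors `q(x)` as `(x* - x)((λ+1)(x + x*) - λρ²)`,
whose second factor is positive for `x > 0`; so `f_λ` increases on `[ρ², x*]` and decreases on
`[x*, 1]`.
-/

open Set

theorem isMaxOn_Icc_of_hasDerivAt {f f' : ℝ → ℝ} {a b c : ℝ} (hc : c ∈ Icc a b)
    (hf : ContinuousOn f (Icc a b)) (hderiv : ∀ x ∈ Ioo a b, HasDerivAt f (f' x) x)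
    (hpos : ∀ x ∈ Ioo a c, 0 ≤ f' x) (hneg : ∀ x ∈ Ioo c b, f' x ≤ 0) :
    IsMaxOn f (Icc a b) c := by
  have hmono : MonotoneOn f (Icc a c) := by
    refine monotoneOn_of_hasDerivWithinAt_nonneg (f' := f') (convex_Icc a c)
      (hf.mono (Icc_subset_Icc_right hc.2)) (fun x hx => ?_) (fun x hx => ?_)
    · rw [interior_Icc] at hx
      exact (hderiv x ⟨hx.1, hx.2.trans_le hc.2⟩).hasDerivWithinAt
    · exact hpos x (by rwa [interior_Icc] at hx)
  have hanti : AntitoneOn f (Icc c b) := by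
    refine antitoneOn_of_hasDerivWithinAt_nonpos (f' := f') (convex_Icc c b)
      (hf.mono (Icc_subset_Icc_left hc.1)) (fun x hx => ?_) (fun x hx => ?_)
    · rw [interior_Icc] at hx
      exact (hderiv x ⟨hc.1.trans_lt hx.1, hx.2⟩).hasDerivWithinAt
    · exact hneg x (by rwa [interior_Icc] at hx)
  intro x hx
  rcases le_total x c with hxc | hcx
  · exact hmono ⟨hx.1, hxc⟩ ⟨hc.1, le_rfl⟩ hxc
  · exact hanti ⟨le_rfl, hc.2⟩ ⟨hcx, hx.2⟩ hcx

section

variable {p a : ℝ}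

theorem hasDerivAt_one_sub_rpow_mul_sub_div {x : ℝ} (hx0 : 0 < x) (hx1 : x < 1) :
    HasDerivAt (fun y => (1 - y) ^ (p + 1) * (y - a) / y)
      ((1 - x) ^ p * (a + p * a * x - (p + 1) * x ^ 2) / x ^ 2) x := by
  have h1x : 0 < 1 - x := by linarith
  have hpow := ((hasDerivAt_id x).const_sub 1).rpow_const (p := p + 1) (Or.inl h1x.ne')
  refine ((hpow.mul ((hasDerivAt_id x).sub_const a)).div (hasDerivAt_id x) hx0.ne').congr_deriv ?_
  simp only [id_eq, Pi.mul_apply, add_sub_cancel_right, rpow_add_one h1x.ne']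
  field_simp
  ring

theorem continuousOn_one_sub_rpow_mul_sub_div (hp : 0 ≤ p + 1) (ha : 0 < a) :
    ContinuousOn (fun y => (1 - y) ^ (p + 1) * (y - a) / y) (Icc a 1) := by
  refine ContinuousOn.div (Continuous.continuousOn ?_) continuousOn_id
    fun x hx => (ha.trans_le hx.1).ne'
  exact ((continuous_const.sub continuous_id).rpow_const fun _ => Or.inr hp).mul
    (continuous_id.sub continuous_const)

end

noncomputable def critPoint (l ρ : ℝ) : ℝ :=
  (l * ρ ^ 2 + ρ * √(l ^ 2 * ρ ^ 2 + 4 * (l + 1))) / (2 * (l + 1))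

section

variable {l ρ : ℝ}

theorem critPoint_quadratic (hl : 0 < l + 1) :
    (l + 1) * critPoint l ρ ^ 2 - l * ρ ^ 2 * critPoint l ρ - ρ ^ 2 = 0 := by
  have hs := sq_sqrt (by positivity : 0 ≤ l ^ 2 * ρ ^ 2 + 4 * (l + 1))
  unfold critPoint
  generalize √(l ^ 2 * ρ ^ 2 + 4 * (l + 1)) = s at hs
  field_simp
  linear_combination ρ ^ 2 * hs

theorem mul_sq_lt_critPoint (hl : 0 < l + 1) (hρ : 0 < ρ) :
    l * ρ ^ 2 < (l + 1) * critPoint l ρ := by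
  have hs := sq_sqrt (by positivity : 0 ≤ l ^ 2 * ρ ^ 2 + 4 * (l + 1))
  have hlρ : l * ρ < √(l ^ 2 * ρ ^ 2 + 4 * (l + 1)) := by
    nlinarith [sqrt_nonneg (l ^ 2 * ρ ^ 2 + 4 * (l + 1))]
  have key : 2 * ((l + 1) * critPoint l ρ) = l * ρ ^ 2 + ρ * √(l ^ 2 * ρ ^ 2 + 4 * (l + 1)) := by
    unfold critPoint; field_simp
  nlinarith

theorem critPoint_mem_Ioo (hl : 0 < l + 1) (hρ : ρ ∈ Ioo 0 1) :
    critPoint l ρ ∈ Ioo (ρ ^ 2) 1 := by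
  obtain ⟨hρ0, hρ1⟩ := hρ
  have hq := critPoint_quadratic (ρ := ρ) hl
  have hlt := mul_sq_lt_critPoint hl hρ0
  have hρsq : ρ ^ 2 < 1 := by nlinarith
  constructor <;> nlinarith [mul_pos (pow_pos hρ0 2) (sub_pos.mpr hρsq)]

theorem quadratic_eq_mul_critPoint_sub (hl : 0 < l + 1) (x : ℝ) :
    ρ ^ 2 + l * ρ ^ 2 * x - (l + 1) * x ^ 2 =
      (critPoint l ρ - x) * ((l + 1) * (x + critPoint l ρ) - l * ρ ^ 2) := by
  linear_combination -critPoint_quadratic (ρ := ρ) hl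

end

/-- For `λ ≥ 0` and `ρ ∈ (0,1)`, the function `f_λ(x) = (1-x)^{λ+1}(x-ρ²)/x` attains its
maximum on `[ρ², 1]` at `x* = (λρ² + ρ√(λ²ρ² + 4(λ+1)))/(2(λ+1))`. -/
theorem stmt3 (l ρ : ℝ) (hl : 0 ≤ l) (hρ : ρ ∈ Set.Ioo (0 : ℝ) 1)
    (f : ℝ → ℝ) (hf : ∀ x, f x = (1 - x) ^ (l + 1) * (x - ρ ^ 2) / x)
    (xstar : ℝ)
    (hx : xstar = (l * ρ ^ 2 + ρ * Real.sqrt (l ^ 2 * ρ ^ 2 + 4 * (l + 1))) / (2 * (l + 1))) :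
    xstar ∈ Set.Icc (ρ ^ 2) 1 ∧ ∀ x ∈ Set.Icc (ρ ^ 2) 1, f x ≤ f xstar := by
  obtain rfl : f = fun x => (1 - x) ^ (l + 1) * (x - ρ ^ 2) / x := funext hf
  obtain rfl : xstar = critPoint l ρ := hx
  have hl1 : 0 < l + 1 := by linarith
  have hmem := critPoint_mem_Ioo hl1 hρ
  have hρsq : 0 < ρ ^ 2 := pow_pos hρ.1 2
  -- the factor `(1 - x)^l / x²` of the derivative is positive, so its sign is that of `x* - x`
  have hsign : ∀ x ∈ Ioo (ρ ^ 2) 1, 0 < (1 - x) ^ l / x ^ 2 *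
      ((l + 1) * (x + critPoint l ρ) - l * ρ ^ 2) := fun x hx => by
    have := rpow_pos_of_pos (sub_pos.mpr hx.2) l
    have := mul_sq_lt_critPoint hl1 hρ.1
    have := hρsq.trans hx.1
    have : 0 < (l + 1) * (x + critPoint l ρ) - l * ρ ^ 2 := by nlinarith
    positivity
  refine ⟨Ioo_subset_Icc_self hmem, isMaxOn_iff.mp <| isMaxOn_Icc_of_hasDerivAt
    (Ioo_subset_Icc_self hmem) (continuousOn_one_sub_rpow_mul_sub_div hl1.le hρsq)
    (fun x hx => hasDerivAt_one_sub_rpow_mul_sub_div (hρsq.trans hx.1) hx.2) ?_ ?_⟩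
  · intro x hx
    have h := hsign x ⟨hx.1, hx.2.trans hmem.2⟩
    rw [mul_div_right_comm, quadratic_eq_mul_critPoint_sub hl1]
    nlinarith [hx.2]
  · intro x hx
    have h := hsign x ⟨hmem.1.trans hx.1, hx.2⟩
    rw [mul_div_right_comm, quadratic_eq_mul_critPoint_sub hl1]
    nlinarith [hx.1]
end
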